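/- Let X₁,...,Xₙ be i.i.d. exponential random variables with mean λ, let Y be a Gamma(1/t,1) random variable independent of the Xᵢ with t ≥ 1, and let w ∈ Δₙ with all wᵢ > 0 and n ≥ 2. Then for all x > 0, P(∑ᵢ wᵢXᵢ / Y ≥ x) > P(X₁ / Y ≥ x). -/

import Mathlib

open MeasureTheory ProbabilityTheory Set Real Filter Topology
open scoped ENNReal

namespace WERT

/-! ### Facts about the gamma measure and its CDF -/

lemma gamma_Iic_nonpos {a r y : ℝ} (hy : y ≤ 0) : gammaMeasure a r (Iic y) = 0 := by
  rw [gammaMeasure, withDensity_apply _ measurableSet_Iic]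
  have h1 : (Iic y : Set ℝ) =ᵐ[volume] (Iio y : Set ℝ) := Iio_ae_eq_Iic.symm
  rw [Measure.restrict_congr_set h1]
  exact lintegral_gammaPDF_of_nonpos hy

lemma gamma_singleton (a r z : ℝ) : gammaMeasure a r {z} = 0 :=
  (withDensity_absolutelyContinuous volume _) (Real.volume_singleton)

/-- The CDF of the gamma distribution (no longer in Mathlib). -/
noncomputable def gammaCDFReal (a r : ℝ) : StieltjesFunction ℝ :=
  cdf (gammaMeasure a r)

lemma gammaCDFReal_eq_integral {a r : ℝ} (ha : 0 < a) (hr : 0 < r) (x : ℝ) :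
    gammaCDFReal a r x = ∫ x in Iic x, gammaPDFReal a r x :=
  cdf_gammaMeasure_eq_integral ha hr x

lemma gammaCDFReal_def (a r : ℝ) : gammaCDFReal a r = cdf (gammaMeasure a r) := rfl

lemma gcdf_nonneg (a r y : ℝ) : 0 ≤ gammaCDFReal a r y := cdf_nonneg _ _

lemma gcdf_le_one (a r y : ℝ) : gammaCDFReal a r y ≤ 1 := cdf_le_one _ _

lemma integrable_gammaPDFReal {a r : ℝ} (ha : 0 < a) (hr : 0 < r) :
    Integrable (gammaPDFReal a r) volume := by
  refine ⟨(measurable_gammaPDFReal a r).aestronglyMeasurable, ?_⟩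
  rw [hasFiniteIntegral_iff_norm]
  have : ∀ x, ENNReal.ofReal ‖gammaPDFReal a r x‖ = gammaPDF a r x := by
    intro x
    rw [Real.norm_of_nonneg (gammaPDFReal_nonneg ha hr x)]
    rfl
  simp_rw [this, lintegral_gammaPDF_eq_one ha hr]
  exact ENNReal.one_lt_top

lemma continuousAt_gammaPDFReal {a : ℝ} {y : ℝ} (hy : 0 < y) :
    ContinuousAt (gammaPDFReal a 1) y := by
  have h : ∀ᶠ z in 𝓝 y, gammaPDFReal a 1 z
      = (1 : ℝ) ^ a / Real.Gamma a * z ^ (a - 1) * Real.exp (-(1 * z)) := by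
    filter_upwards [Ioi_mem_nhds hy] with z hz
    simp only [gammaPDFReal, if_pos (le_of_lt (mem_Ioi.mp hz))]
  refine ContinuousAt.congr ?_ (Filter.EventuallyEq.symm h)
  have h1 : ContinuousAt (fun z : ℝ => z ^ (a - 1)) y :=
    Real.continuousAt_rpow_const y (a - 1) (Or.inl hy.ne')
  have h2 : ContinuousAt (fun z : ℝ => Real.exp (-(1 * z))) y := by fun_prop
  exact (h1.const_mul _).mul h2

lemma hasDerivAt_gammaCDF {a : ℝ} (ha : 0 < a) {y : ℝ} (hy : 0 < y) :
    HasDerivAt (fun z => gammaCDFReal a 1 z) (gammaPDFReal a 1 y) y := by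
  have hint : Integrable (gammaPDFReal a 1) volume := integrable_gammaPDFReal ha one_pos
  have key : ∀ z : ℝ, gammaCDFReal a 1 z
      = (∫ u in (0:ℝ)..z, gammaPDFReal a 1 u) + gammaCDFReal a 1 0 := by
    intro z
    have h0 := gammaCDFReal_eq_integral ha one_pos z
    have h1 := gammaCDFReal_eq_integral ha one_pos 0
    have h2 : (∫ u in (0:ℝ)..z, gammaPDFReal a 1 u)
        = (∫ u in Iic z, gammaPDFReal a 1 u) - ∫ u in Iic 0, gammaPDFReal a 1 u :=
      (intervalIntegral.integral_Iic_sub_Iic (a := (0:ℝ)) (b := z) (f := gammaPDFReal a 1)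
        (μ := volume) hint.integrableOn hint.integrableOn).symm
    rw [h0, h1, h2]; ring
  have hD : HasDerivAt (fun z => ∫ u in (0:ℝ)..z, gammaPDFReal a 1 u)
      (gammaPDFReal a 1 y) y := by
    refine intervalIntegral.integral_hasDerivAt_right hint.intervalIntegrable
      (measurable_gammaPDFReal a 1).stronglyMeasurable.stronglyMeasurableAtFilter
      (continuousAt_gammaPDFReal hy)
  have := hD.add_const (gammaCDFReal a 1 0)
  exact this.congr_of_eventuallyEq (Filter.Eventually.of_forall fun z => (key z))

lemma strictAntiOn_gammaPDFReal {a : ℝ} (ha : 0 < a) (ha1 : a ≤ 1) :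
    StrictAntiOn (gammaPDFReal a 1) (Ioi 0) := by
  intro u hu v hv huv
  simp only [mem_Ioi] at hu hv
  have hG : 0 < Real.Gamma a := Real.Gamma_pos_of_pos ha
  simp only [gammaPDFReal, if_pos hu.le, if_pos hv.le, one_rpow, one_mul]
  have h1 : v ^ (a - 1) ≤ u ^ (a - 1) :=
    Real.rpow_le_rpow_of_nonpos hu huv.le (by linarith)
  have h2 : Real.exp (-v) < Real.exp (-u) := Real.exp_lt_exp.2 (by linarith)
  have h3 : 0 < u ^ (a - 1) := Real.rpow_pos_of_pos hu _
  have h5 : 0 < Real.exp (-v) := Real.exp_pos _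
  calc 1 / Real.Gamma a * v ^ (a - 1) * Real.exp (-v)
      ≤ 1 / Real.Gamma a * u ^ (a - 1) * Real.exp (-v) := by
        apply mul_le_mul_of_nonneg_right _ h5.le
        apply mul_le_mul_of_nonneg_left h1 (by positivity)
    _ < 1 / Real.Gamma a * u ^ (a - 1) * Real.exp (-u) := by
        apply mul_lt_mul_of_pos_left h2 (by positivity)

lemma strictConcaveOn_gammaCDF {a : ℝ} (ha : 0 < a) (ha1 : a ≤ 1) :
    StrictConcaveOn ℝ (Ioi 0) (fun z => gammaCDFReal a 1 z) := by
  refine StrictAntiOn.strictConcaveOn_of_deriv (convex_Ioi 0) ?_ ?_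
  · intro z hz
    exact ((hasDerivAt_gammaCDF ha hz).continuousAt).continuousWithinAt
  · rw [interior_Ioi]
    intro u hu v hv huv
    rw [(hasDerivAt_gammaCDF ha hu).deriv, (hasDerivAt_gammaCDF ha hv).deriv]
    exact strictAntiOn_gammaPDFReal ha ha1 hu hv huv

/-! ### Measure-theoretic helper lemmas -/

lemma tail_eq {Ω : Type*} [MeasurableSpace Ω] (μ : Measure Ω) [IsProbabilityMeasure μ]
    {a : ℝ} (ha : 0 < a) {Z Y : Ω → ℝ} (hZ : Measurable Z) (hY : Measurable Y)
    (hYd : Measure.map Y μ = gammaMeasure a 1) (hind : IndepFun Z Y μ)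
    {x : ℝ} (hx : 0 < x) :
    μ {ω | x ≤ Z ω / Y ω} = ∫⁻ ω, ENNReal.ofReal (gammaCDFReal a 1 (Z ω / x)) ∂μ := by
  haveI : IsProbabilityMeasure (gammaMeasure a 1) := isProbabilityMeasure_gammaMeasure ha one_pos
  have hY0 : ∀ᵐ ω ∂μ, 0 < Y ω := by
    have h0 : μ (Y ⁻¹' (Iic 0)) = 0 := by
      rw [← Measure.map_apply hY measurableSet_Iic, hYd]
      exact gamma_Iic_nonpos le_rfl
    have := measure_eq_zero_iff_ae_notMem.mp h0
    filter_upwards [this] with ω h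
    simpa [not_le] using h
  have hsets : {ω | x ≤ Z ω / Y ω} =ᵐ[μ] {ω | Y ω ≤ Z ω / x} := by
    filter_upwards [hY0] with ω hω
    show (x ≤ Z ω / Y ω) = (Y ω ≤ Z ω / x)
    simp only [eq_iff_iff]
    rw [le_div_iff₀ hω, le_div_iff₀ hx, mul_comm]
  rw [measure_congr hsets]
  have hB : MeasurableSet {p : ℝ × ℝ | p.2 ≤ p.1 / x} :=
    measurableSet_le measurable_snd (measurable_fst.div_const x)
  have hmap : Measure.map (fun ω => (Z ω, Y ω)) μ = (Measure.map Z μ).prod (Measure.map Y μ) :=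
    (indepFun_iff_map_prod_eq_prod_map_map hZ.aemeasurable hY.aemeasurable).mp hind
  have hset2 : {ω | Y ω ≤ Z ω / x} = (fun ω => (Z ω, Y ω)) ⁻¹' {p : ℝ × ℝ | p.2 ≤ p.1 / x} := rfl
  rw [hset2, ← Measure.map_apply (hZ.prodMk hY) hB, hmap, hYd, Measure.prod_apply hB]
  have hpre : ∀ z : ℝ, (Prod.mk z ⁻¹' {p : ℝ × ℝ | p.2 ≤ p.1 / x}) = Iic (z / x) :=
    fun z => rfl
  simp_rw [hpre]
  have hiic : ∀ z : ℝ, gammaMeasure a 1 (Iic (z/x))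
      = ENNReal.ofReal (gammaCDFReal a 1 (z/x)) := by
    intro z
    rw [gammaCDFReal_def, ofReal_cdf]
  simp_rw [hiic]
  rw [lintegral_map ?_ hZ]
  exact ENNReal.measurable_ofReal.comp
    ((gammaCDFReal a 1).mono.measurable.comp (measurable_id.div_const x))

lemma ae_pos {Ω : Type*} [MeasurableSpace Ω] (μ : Measure Ω) {Z : Ω → ℝ} (hZ : Measurable Z)
    {r : ℝ} (hZd : Measure.map Z μ = expMeasure r) : ∀ᵐ ω ∂μ, 0 < Z ω := by
  have h0 : μ (Z ⁻¹' (Iic 0)) = 0 := by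
    rw [← Measure.map_apply hZ measurableSet_Iic, hZd, expMeasure]
    exact gamma_Iic_nonpos le_rfl
  have := measure_eq_zero_iff_ae_notMem.mp h0
  filter_upwards [this] with ω h
  simpa [not_le] using h

lemma ae_ne {Ω : Type*} [MeasurableSpace Ω] (μ : Measure Ω) [IsProbabilityMeasure μ]
    {Z W : Ω → ℝ} (hZ : Measurable Z) (hW : Measurable W) {r : ℝ}
    (hWd : Measure.map W μ = expMeasure r) (hind : IndepFun Z W μ) :
    μ {ω | Z ω = W ω} = 0 := by
  have hB : MeasurableSet {p : ℝ × ℝ | p.1 = p.2} :=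
    measurableSet_eq_fun measurable_fst measurable_snd
  have hmap : Measure.map (fun ω => (Z ω, W ω)) μ = (Measure.map Z μ).prod (Measure.map W μ) :=
    (indepFun_iff_map_prod_eq_prod_map_map hZ.aemeasurable hW.aemeasurable).mp hind
  have hset : {ω | Z ω = W ω} = (fun ω => (Z ω, W ω)) ⁻¹' {p : ℝ × ℝ | p.1 = p.2} := rfl
  rw [hset, ← Measure.map_apply (hZ.prodMk hW) hB, hmap, Measure.prod_apply hB]
  have hpre : ∀ z : ℝ, (Prod.mk z ⁻¹' {p : ℝ × ℝ | p.1 = p.2}) = {z} := by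
    intro z; ext y; simp [eq_comm]
  simp_rw [hpre, hWd, expMeasure, gamma_singleton, lintegral_zero]

lemma integrable_comp {Ω : Type*} [MeasurableSpace Ω] (μ : Measure Ω) [IsProbabilityMeasure μ]
    (a r : ℝ) {f : Ω → ℝ} (hf : Measurable f) :
    Integrable (fun ω => gammaCDFReal a r (f ω)) μ := by
  refine Integrable.mono' (integrable_const 1) ?_ ?_
  · exact ((gammaCDFReal a r).mono.measurable.comp hf).aestronglyMeasurable
  · refine Eventually.of_forall fun ω => ?_
    rw [Real.norm_of_nonneg (gcdf_nonneg _ _ _)]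
    exact gcdf_le_one _ _ _

end WERT

open WERT

/-- Let `X 0, ..., X (n-1)` be i.i.d. exponential with mean `lam`, `Y ~ Gamma(1/t, 1)`
independent of the `X i` with `t ≥ 1`, and `w` strictly positive weights summing to one
(`n ≥ 2`). Then for all `x > 0`, `P(∑ i, w i * X i / Y ≥ x) > P(X 0 / Y ≥ x)`. -/
theorem weighted_exp_ratio_tail_strict
    {Ω : Type*} [MeasurableSpace Ω] (μ : Measure Ω) [IsProbabilityMeasure μ]
    (n : ℕ) (hn : 2 ≤ n) (lam t : ℝ) (hlam : 0 < lam) (ht : 1 ≤ t)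
    (X : Fin n → Ω → ℝ) (Y : Ω → ℝ)
    (hXMeas : ∀ i, Measurable (X i)) (hYMeas : Measurable Y)
    (hXdist : ∀ i, Measure.map (X i) μ = expMeasure lam⁻¹)
    (hYdist : Measure.map Y μ = gammaMeasure (1/t) 1)
    (hIndep : iIndepFun ((Fin.cons Y X : Fin (n+1) → Ω → ℝ)) μ)
    (w : Fin n → ℝ) (hw : ∀ i, 0 < w i) (hw1 : ∑ i, w i = 1) :
    ∀ x : ℝ, 0 < x →
      μ {ω | x ≤ X ⟨0, by omega⟩ ω / Y ω} < μ {ω | x ≤ (∑ i, w i * X i ω) / Y ω} := by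
  intro x hx
  classical
  have ht0 : 0 < t := lt_of_lt_of_le one_pos ht
  set a : ℝ := 1/t with ha_def
  have ha0 : 0 < a := by positivity
  have ha1 : a ≤ 1 := by
    rw [ha_def, div_le_one ht0]; exact ht
  set i0 : Fin n := ⟨0, by omega⟩ with hi0_def
  set i1 : Fin n := ⟨1, by omega⟩ with hi1_def
  set S : Ω → ℝ := fun ω => ∑ i, w i * X i ω with hS_def
  have hSmeas : Measurable S :=
    Finset.measurable_sum Finset.univ (fun i _ => (hXMeas i).const_mul (w i))
  -- independence facts
  have hfam : iIndepFun
      (Fin.cons Y (fun i ω => w i * X i ω) : Fin (n+1) → Ω → ℝ) μ := by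
    have hg : ∀ j : Fin (n+1),
        Measurable ((Fin.cons id (fun i => fun z : ℝ => w i * z) : Fin (n+1) → ℝ → ℝ) j) := by
      intro j
      refine Fin.cases ?_ ?_ j
      · simpa using measurable_id
      · intro i; simpa using (measurable_id.const_mul (w i))
    have h := hIndep.comp _ hg
    convert h using 1
    funext j
    refine Fin.cases ?_ ?_ j
    · simp only [Fin.cons_zero]; rfl
    · intro i; simp only [Fin.cons_succ]; rfl
  have hfam_meas : ∀ j : Fin (n+1),
      Measurable ((Fin.cons Y (fun i ω => w i * X i ω) : Fin (n+1) → Ω → ℝ) j) := by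
    intro j
    refine Fin.cases ?_ ?_ j
    · simpa using hYMeas
    · intro i; simpa using (hXMeas i).const_mul (w i)
  have hSY : IndepFun S Y μ := by
    have h0nm : (0 : Fin (n+1)) ∉ Finset.univ.image (Fin.succ : Fin n → Fin (n+1)) := by
      simp only [Finset.mem_image, Finset.mem_univ, true_and, not_exists]
      exact fun i => Fin.succ_ne_zero i
    have h := hfam.indepFun_finsetSum_of_notMem hfam_meas h0nm
    have hsum : (∑ j ∈ Finset.univ.image (Fin.succ : Fin n → Fin (n+1)),
        (Fin.cons Y (fun i ω => w i * X i ω) : Fin (n+1) → Ω → ℝ) j) = S := by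
      rw [Finset.sum_image (fun i _ j _ h => Fin.succ_injective n h)]
      funext ω
      rw [Finset.sum_apply]
      simp [hS_def]
    rw [hsum, Fin.cons_zero] at h
    exact h
  have hX0Y : IndepFun (X i0) Y μ := by
    have h := hIndep.indepFun (i := i0.succ) (j := 0) (Fin.succ_ne_zero _)
    simpa using h
  have hX01 : IndepFun (X i0) (X i1) μ := by
    have hne : i0.succ ≠ i1.succ := by
      simp [hi0_def, hi1_def, Fin.ext_iff]
    have h := hIndep.indepFun hne
    simpa using h
  -- almost-sure facts
  have hXpos : ∀ᵐ ω ∂μ, ∀ i, 0 < X i ω :=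
    (MeasureTheory.ae_all_iff).mpr fun i => ae_pos μ (hXMeas i) (hXdist i)
  have hne_null : μ {ω | X i0 ω = X i1 ω} = 0 :=
    ae_ne μ (hXMeas i0) (hXMeas i1) (hXdist i1) hX01
  have hne_ae : ∀ᵐ ω ∂μ, X i0 ω ≠ X i1 ω := by
    rw [ae_iff]
    simpa [not_not] using hne_null
  -- the concave CDF
  set F : ℝ → ℝ := fun z => gammaCDFReal a 1 z with hF_def
  have hFconc : StrictConcaveOn ℝ (Ioi 0) F := strictConcaveOn_gammaCDF ha0 ha1
  -- the good event
  set E : Set Ω := {ω | (∀ i, 0 < X i ω) ∧ X i0 ω ≠ X i1 ω} with hE_def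
  have hE_ae : ∀ᵐ ω ∂μ, ω ∈ E := by
    filter_upwards [hXpos, hne_ae] with ω h1 h2
    exact ⟨h1, h2⟩
  -- pointwise Jensen
  set g : Ω → ℝ := fun ω => F (S ω / x) with hg_def
  set f : Ω → ℝ := fun ω => ∑ i, w i * F (X i ω / x) with hf_def
  have hsum_div : ∀ ω, (∀ i, 0 < X i ω) → ∑ i, w i • (X i ω / x) = S ω / x := by
    intro ω _
    rw [hS_def]
    simp only [smul_eq_mul]
    rw [Finset.sum_div]
    congr 1
    funext i
    ring
  have h_lt_on_E : ∀ ω ∈ E, f ω < g ω := by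
    intro ω hω
    obtain ⟨hpos, hne⟩ := hω
    have hmem : ∀ i ∈ Finset.univ, X i ω / x ∈ Ioi (0:ℝ) := by
      intro i _
      exact div_pos (hpos i) hx
    have hp : ∃ j ∈ Finset.univ, ∃ k ∈ Finset.univ, X j ω / x ≠ X k ω / x := by
      refine ⟨i0, Finset.mem_univ _, i1, Finset.mem_univ _, ?_⟩
      intro h
      apply hne
      have := congrArg (· * x) h
      simpa [div_mul_cancel₀, hx.ne'] using this
    have h := hFconc.lt_map_sum (fun i _ => hw i) hw1 hmem hp
    rw [hsum_div ω hpos] at h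
    simpa [hf_def, hg_def, smul_eq_mul] using h
  have h_le_ae : f ≤ᵐ[μ] g := by
    filter_upwards [hE_ae] with ω hω
    exact (h_lt_on_E ω hω).le
  -- integrability
  have hg_int : Integrable g μ := integrable_comp μ a 1 (hSmeas.div_const x)
  have hfi_int : ∀ i : Fin n, Integrable (fun ω => F (X i ω / x)) μ :=
    fun i => integrable_comp μ a 1 ((hXMeas i).div_const x)
  have hf_int : Integrable f μ := by
    apply integrable_finset_sum
    intro i _
    exact (hfi_int i).const_mul (w i)
  -- identical distribution of the summands
  have h_id : ∀ i : Fin n, ∫ ω, F (X i ω / x) ∂μ = ∫ ω, F (X i0 ω / x) ∂μ := by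
    intro i
    have key : ∀ j : Fin n, ∫ ω, F (X j ω / x) ∂μ = ∫ z, F (z / x) ∂(expMeasure lam⁻¹) := by
      intro j
      rw [← hXdist j]
      rw [integral_map (hXMeas j).aemeasurable]
      exact ((gammaCDFReal a 1).mono.measurable.comp
        (measurable_id.div_const x)).aestronglyMeasurable
    rw [key i, key i0]
  have hf_integral : ∫ ω, f ω ∂μ = ∫ ω, F (X i0 ω / x) ∂μ := by
    rw [hf_def]
    rw [integral_finset_sum _ (fun i _ => (hfi_int i).const_mul (w i))]
    have : ∀ i ∈ Finset.univ, ∫ ω, w i * F (X i ω / x) ∂μ = w i * ∫ ω, F (X i0 ω / x) ∂μ := by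
      intro i _
      rw [integral_const_mul, h_id i]
    rw [Finset.sum_congr rfl this, ← Finset.sum_mul, hw1, one_mul]
  -- strict inequality of the real integrals
  have hd_nonneg : 0 ≤ᵐ[μ] (g - f) := by
    filter_upwards [h_le_ae] with ω hω
    simpa using hω
  have hd_int : Integrable (g - f) μ := hg_int.sub hf_int
  have hsupp : 0 < μ (Function.support (g - f)) := by
    have hsub : E ⊆ Function.support (g - f) := by
      intro ω hω
      have := h_lt_on_E ω hω
      simp only [Function.mem_support, Pi.sub_apply]
      intro h
      linarith
    have hEc : μ Eᶜ = 0 := by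
      refine measure_eq_zero_iff_ae_notMem.mpr ?_
      filter_upwards [hE_ae] with ω h
      simpa using h
    have h1 : (1:ℝ≥0∞) ≤ μ (Function.support (g - f)) + μ (Function.support (g - f))ᶜ := by
      rw [← measure_univ (μ := μ), ← Set.union_compl_self (Function.support (g - f))]
      exact measure_union_le _ _
    have h2 : μ (Function.support (g - f))ᶜ = 0 := by
      apply measure_mono_null _ hEc
      exact Set.compl_subset_compl.mpr hsub
    rw [h2, add_zero] at h1
    exact lt_of_lt_of_le zero_lt_one h1
  have h_int_lt : ∫ ω, f ω ∂μ < ∫ ω, g ω ∂μ := by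
    have h0 : 0 < ∫ ω, (g - f) ω ∂μ :=
      (integral_pos_iff_support_of_nonneg_ae hd_nonneg hd_int).mpr hsupp
    have h1 : ∫ ω, (g - f) ω ∂μ = ∫ ω, g ω ∂μ - ∫ ω, f ω ∂μ := by
      simp only [Pi.sub_apply]
      exact integral_sub hg_int hf_int
    linarith
  have key : ∫ ω, F (X i0 ω / x) ∂μ < ∫ ω, F (S ω / x) ∂μ := by
    rw [← hf_integral]
    exact h_int_lt
  -- convert back to measures
  have hL : μ {ω | x ≤ X i0 ω / Y ω}
      = ENNReal.ofReal (∫ ω, F (X i0 ω / x) ∂μ) := by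
    rw [tail_eq μ ha0 (hXMeas i0) hYMeas hYdist hX0Y hx]
    rw [← ofReal_integral_eq_lintegral_ofReal (integrable_comp μ a 1 ((hXMeas i0).div_const x))
      (Eventually.of_forall fun ω => gcdf_nonneg _ _ _)]
  have hR : μ {ω | x ≤ S ω / Y ω}
      = ENNReal.ofReal (∫ ω, F (S ω / x) ∂μ) := by
    rw [tail_eq μ ha0 hSmeas hYMeas hYdist hSY hx]
    rw [← ofReal_integral_eq_lintegral_ofReal (integrable_comp μ a 1 (hSmeas.div_const x))
      (Eventually.of_forall fun ω => gcdf_nonneg _ _ _)]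
  show μ {ω | x ≤ X i0 ω / Y ω} < μ {ω | x ≤ S ω / Y ω}
  rw [hL, hR]
  apply (ENNReal.ofReal_lt_ofReal_iff ?_).mpr key
  exact lt_of_le_of_lt (integral_nonneg fun ω => gcdf_nonneg _ _ _) key
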